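/- For all trace-free A, B, C, D ∈ SL(2,ℂ): tr(ABCD) = (1/2)·(tr(AB)·tr(CD) + tr(AD)·tr(BC) − tr(AC)·tr(BD)). -/

import Mathlib

open Matrix

/-- `SL(2,ℂ)`. -/
abbrev SL2C := Matrix.SpecialLinearGroup (Fin 2) ℂ

/-- The trace of an element of `SL(2,ℂ)`. -/
noncomputable def trSL2 (A : SL2C) : ℂ := Matrix.trace (A : Matrix (Fin 2) (Fin 2) ℂ)

/-!
Trace-free `2 × 2` matrices anticommute up to a scalar: `XY + YX = tr(XY) • 1`. Using this to
move `B` past `C`, then `A` past `C`, then `C` past `D` (with a cyclic permutation in between)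
turns `tr(ABCD)` into `tr(AD)tr(BC) - tr(AC)tr(BD) + tr(AB)tr(CD) - tr(ABCD)`.
-/

namespace Matrix

variable {R : Type*} [CommRing R]

theorem mul_add_mul_eq_trace_mul_smul_one {X Y : Matrix (Fin 2) (Fin 2) R}
    (hX : X.trace = 0) (hY : Y.trace = 0) : X * Y + Y * X = (X * Y).trace • 1 := by
  rw [trace_fin_two] at hX hY
  have hX₁₁ : X 1 1 = -X 0 0 := by linear_combination hX
  have hY₁₁ : Y 1 1 = -Y 0 0 := by linear_combination hY
  ext i j
  fin_cases i <;> fin_cases j <;>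
    simp [trace_fin_two, mul_apply, hX₁₁, hY₁₁] <;> ring

theorem trace_mul_mul_mul_add_trace_mul_mul_mul {P Q X Y : Matrix (Fin 2) (Fin 2) R}
    (hX : X.trace = 0) (hY : Y.trace = 0) :
    (P * X * Y * Q).trace + (P * Y * X * Q).trace = (X * Y).trace * (P * Q).trace := by
  rw [Matrix.mul_assoc P X Y, Matrix.mul_assoc P Y X, ← trace_add, ← Matrix.add_mul,
    ← Matrix.mul_add, mul_add_mul_eq_trace_mul_smul_one hX hY]
  simp

theorem two_mul_trace_mul_mul_mul_of_trace_eq_zero {A B C D : Matrix (Fin 2) (Fin 2) R}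
    (hA : A.trace = 0) (hB : B.trace = 0) (hC : C.trace = 0) (hD : D.trace = 0) :
    2 * (A * B * C * D).trace =
      (A * B).trace * (C * D).trace + (A * D).trace * (B * C).trace
        - (A * C).trace * (B * D).trace := by
  have swapBC := trace_mul_mul_mul_add_trace_mul_mul_mul (P := A) (Q := D) hB hC
  have swapAC := trace_mul_mul_mul_add_trace_mul_mul_mul (P := 1) (Q := B * D) hA hC
  have swapCD := trace_mul_mul_mul_add_trace_mul_mul_mul (P := A * B) (Q := 1) hC hD
  have cycle : (C * (A * B * D)).trace = (A * B * D * C).trace := trace_mul_comm _ _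
  simp only [Matrix.mul_assoc, Matrix.one_mul, Matrix.mul_one] at *
  linear_combination swapBC - swapAC + swapCD + cycle

end Matrix

theorem stmt6 (A B C D : SL2C)
    (hA : trSL2 A = 0) (hB : trSL2 B = 0) (hC : trSL2 C = 0) (hD : trSL2 D = 0) :
    trSL2 (A * B * C * D) =
      (1 / 2) * (trSL2 (A * B) * trSL2 (C * D) + trSL2 (A * D) * trSL2 (B * C)
        - trSL2 (A * C) * trSL2 (B * D)) := by
  rw [one_div, eq_inv_mul_iff_mul_eq₀ two_ne_zero]
  exact two_mul_trace_mul_mul_mul_of_trace_eq_zero hA hB hC hD
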